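/- For all integers k ≥ 1 and n ≥ 0, H_k(ΔS_n)·H_{k−2}(Δ^{m+1} S_{n+1}) = H_{k−1}(Δ^{m+1} S_{n+1})·H_{k−1}(ΔS_n) − H_{k−1}(Δ^{m+1} S_n)·H_{k−1}(ΔS_{n+1}). -/

import Mathlib

/-!
The identity is the Desnanot–Jacobi (Dodgson condensation) identity
`det A · det A° = det A↖ · det A↘ - det A↗ · det A↙` for the `(k × k)` matrix
`A = (Δ^{im} ΔS_{n+j})`, where `A°` is `A` with its first and last rows and columns removed and
`A↖, A↘, A↗, A↙` are `A` with one of its first/last rows and one of its first/last columns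
removed. Removing the first row of `A` replaces `ΔS` by `Δ^m ΔS = Δ^{m+1} S`, removing the first
column shifts `n` to `n + 1`, so these five minors are exactly the Hankel determinants of the
statement. Desnanot–Jacobi itself follows from two Schur complements with respect to the interior
block `A°`: every corner minor equals `det A°` times an entry of the same `2 × 2` Schur
complement, whose determinant is `det A / det A°`.
-/

/-- Forward difference operator: `(fd u) n = u (n+1) - u n`.
Iterated differences are `fd^[i] u`. -/
def fd (u : ℕ → ℝ) : ℕ → ℝ := fun n => u (n + 1) - u n

/-- Hankel-type determinant `H_k(u_n)` (depending on the fixed integer `m`):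
the determinant of the `k × k` matrix whose `(i,j)` entry is `Δ^{i·m} u_{n+j}`.
By convention `H_k = 0` for `k < 0`, and `H_0 = 1` (empty determinant). -/
noncomputable def Hd (m : ℕ) (u : ℕ → ℝ) (k : ℤ) (n : ℕ) : ℝ :=
  if k < 0 then 0
  else Matrix.det (Matrix.of fun i j : Fin k.toNat => fd^[i.val * m] u (n + j.val))


theorem Function.bijective_sumElim {α β γ : Type*} [Fintype α] [Fintype β] [Fintype γ]
    {f : α → γ} {g : β → γ} (hf : f.Injective) (hg : g.Injective) (hfg : ∀ a b, f a ≠ g b)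
    (hcard : Fintype.card α + Fintype.card β = Fintype.card γ) :
    (Sum.elim f g).Bijective :=
  (Fintype.bijective_iff_injective_and_card _).2 ⟨hf.sumElim hg hfg, by simpa using hcard⟩

namespace Matrix

variable {ι R : Type*}

def borderedMinor (A : Matrix (Fin 2 ⊕ ι) (Fin 2 ⊕ ι) R) (x y : Fin 2) :
    Matrix (Unit ⊕ ι) (Unit ⊕ ι) R :=
  A.submatrix (Sum.map (fun _ => x) id) (Sum.map (fun _ => y) id)

theorem borderedMinor_eq_fromBlocks (A : Matrix (Fin 2 ⊕ ι) (Fin 2 ⊕ ι) R) (x y : Fin 2) :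
    A.borderedMinor x y = fromBlocks (of fun _ _ => A.toBlocks₁₁ x y)
      (of fun _ j => A.toBlocks₁₂ x j) (of fun i _ => A.toBlocks₂₁ i y) A.toBlocks₂₂ := by
  ext (i | i) (j | j) <;> rfl

variable [Fintype ι] [DecidableEq ι] [CommRing R]

theorem det_borderedMinor (A : Matrix (Fin 2 ⊕ ι) (Fin 2 ⊕ ι) R) [Invertible A.toBlocks₂₂]
    (x y : Fin 2) :
    (A.borderedMinor x y).det = A.toBlocks₂₂.det *
      (A.toBlocks₁₁ - A.toBlocks₁₂ * ⅟A.toBlocks₂₂ * A.toBlocks₂₁) x y := by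
  rw [borderedMinor_eq_fromBlocks, det_fromBlocks₂₂, det_unique (n := Unit)]
  simp [mul_apply]

theorem det_mul_det_toBlocks₂₂_of_invertible (A : Matrix (Fin 2 ⊕ ι) (Fin 2 ⊕ ι) R)
    [Invertible A.toBlocks₂₂] :
    A.det * A.toBlocks₂₂.det = (A.borderedMinor 0 0).det * (A.borderedMinor 1 1).det -
      (A.borderedMinor 0 1).det * (A.borderedMinor 1 0).det := by
  have hA : A.det =
      A.toBlocks₂₂.det * (A.toBlocks₁₁ - A.toBlocks₁₂ * ⅟A.toBlocks₂₂ * A.toBlocks₂₁).det := by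
    conv_lhs => rw [← fromBlocks_toBlocks A]
    exact det_fromBlocks₂₂ ..
  rw [hA, det_fin_two]
  simp only [det_borderedMinor]
  ring

theorem map_det_mul_det_toBlocks₂₂_sub {S : Type*} [CommRing S] (f : R →+* S)
    (A : Matrix (Fin 2 ⊕ ι) (Fin 2 ⊕ ι) R) :
    f (A.det * A.toBlocks₂₂.det - ((A.borderedMinor 0 0).det * (A.borderedMinor 1 1).det -
      (A.borderedMinor 0 1).det * (A.borderedMinor 1 0).det)) =
    (A.map f).det * (A.map f).toBlocks₂₂.det -
      (((A.map f).borderedMinor 0 0).det * ((A.map f).borderedMinor 1 1).det -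
        ((A.map f).borderedMinor 0 1).det * ((A.map f).borderedMinor 1 0).det) := by
  simp only [map_sub, map_mul, RingHom.map_det, RingHom.mapMatrix_apply]
  rfl

theorem det_toBlocks₂₂_mvPolynomialX_ne_zero {κ : Type*} [Fintype κ] [DecidableEq κ]
    [Nontrivial R] : (mvPolynomialX (κ ⊕ ι) (κ ⊕ ι) R).toBlocks₂₂.det ≠ 0 := by
  intro h
  have h1 := congrArg (fun M : Matrix (κ ⊕ ι) (κ ⊕ ι) R => M.toBlocks₂₂.det)
    (mvPolynomialX_mapMatrix_eval (1 : Matrix (κ ⊕ ι) (κ ⊕ ι) R))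
  change ((mvPolynomialX (κ ⊕ ι) (κ ⊕ ι) R).toBlocks₂₂.map
    (MvPolynomial.eval fun p => (1 : Matrix (κ ⊕ ι) (κ ⊕ ι) R) p.1 p.2)).det = _ at h1
  rw [← RingHom.mapMatrix_apply, ← RingHom.map_det, h, map_zero, ← fromBlocks_one,
    toBlocks_fromBlocks₂₂, det_one] at h1
  exact zero_ne_one h1

theorem det_mul_det_toBlocks₂₂ (A : Matrix (Fin 2 ⊕ ι) (Fin 2 ⊕ ι) R) :
    A.det * A.toBlocks₂₂.det = (A.borderedMinor 0 0).det * (A.borderedMinor 1 1).det -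
      (A.borderedMinor 0 1).det * (A.borderedMinor 1 0).det := by
  -- It suffices to treat the generic matrix over `ℤ`: its interior block has a nonzero
  -- determinant, hence is invertible over the fraction field.
  let X := mvPolynomialX (Fin 2 ⊕ ι) (Fin 2 ⊕ ι) ℤ
  let φ := algebraMap (MvPolynomial ((Fin 2 ⊕ ι) × (Fin 2 ⊕ ι)) ℤ)
    (FractionRing (MvPolynomial ((Fin 2 ⊕ ι) × (Fin 2 ⊕ ι)) ℤ))
  have hφ : Function.Injective φ := IsFractionRing.injective _ _
  have hdet : (X.map φ).toBlocks₂₂.det ≠ 0 := by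
    change (X.toBlocks₂₂.map φ).det ≠ 0
    rw [← RingHom.mapMatrix_apply, ← RingHom.map_det, map_ne_zero_iff _ hφ]
    exact det_toBlocks₂₂_mvPolynomialX_ne_zero
  let := invertibleOfIsUnitDet _ (isUnit_iff_ne_zero.mpr hdet)
  have hX := map_det_mul_det_toBlocks₂₂_sub φ X
  rw [det_mul_det_toBlocks₂₂_of_invertible (X.map φ), sub_self, map_eq_zero_iff _ hφ] at hX
  have hA := map_det_mul_det_toBlocks₂₂_sub
    (MvPolynomial.eval₂Hom (Int.castRingHom R) fun p => A p.1 p.2) X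
  rw [hX, map_zero, MvPolynomial.coe_eval₂Hom, mvPolynomialX_map_eval₂] at hA
  exact sub_eq_zero.mp hA.symm

theorem det_submatrix_mul_det_submatrix_swap {κ : Type*} [Fintype κ] [DecidableEq κ]
    (M N : Matrix κ κ R) (e f : ι ≃ κ) :
    (M.submatrix e f).det * (N.submatrix f e).det = M.det * N.det := by
  set σ : Equiv.Perm ι := f.trans e.symm
  have hM : M.submatrix e f = (M.submatrix e e).submatrix id σ := by ext; simp [σ]
  have hN : N.submatrix f e = (N.submatrix e e).submatrix σ id := by ext; simp [σ]
  have hσ : ((Equiv.Perm.sign σ : ℤ) : R) * (Equiv.Perm.sign σ : ℤ) = 1 := by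
    rw [← Int.cast_mul, ← Units.val_mul, Int.units_mul_self, Units.val_one, Int.cast_one]
  rw [hM, hN, det_permute', det_permute, det_submatrix_equiv_self, det_submatrix_equiv_self]
  linear_combination M.det * N.det * hσ

theorem desnanot_jacobi {n : ℕ} (A : Matrix (Fin (n + 2)) (Fin (n + 2)) R) :
    A.det * (A.submatrix (Fin.succ ∘ Fin.castSucc) (Fin.succ ∘ Fin.castSucc)).det =
      (A.submatrix Fin.castSucc Fin.castSucc).det * (A.submatrix Fin.succ Fin.succ).det -
        (A.submatrix Fin.castSucc Fin.succ).det * (A.submatrix Fin.succ Fin.castSucc).det := by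
  let e : Fin 2 ⊕ Fin n ≃ Fin (n + 2) := .ofBijective _
    (Function.bijective_sumElim (f := ![0, Fin.last (n + 1)]) (g := Fin.succ ∘ Fin.castSucc)
      (by intro a b; fin_cases a <;> fin_cases b <;> simp [Fin.ext_iff])
      (Fin.succ_injective _ |>.comp (Fin.castSucc_injective _))
      (by intro a b; fin_cases a <;> simp [Fin.ext_iff]; omega) (by simp; omega))
  let e₀ : Unit ⊕ Fin n ≃ Fin (n + 1) := .ofBijective _
    (Function.bijective_sumElim (f := fun _ => 0) (g := Fin.succ)
      (Function.injective_of_subsingleton _) (Fin.succ_injective _)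
      (fun _ b => (Fin.succ_ne_zero b).symm) (by simp [add_comm]))
  let eₗ : Unit ⊕ Fin n ≃ Fin (n + 1) := .ofBijective _
    (Function.bijective_sumElim (f := fun _ => Fin.last n) (g := Fin.castSucc)
      (Function.injective_of_subsingleton _) (Fin.castSucc_injective _)
      (fun _ b => (Fin.castSucc_lt_last b).ne') (by simp [add_comm]))
  have h00 : (A.submatrix e e).borderedMinor 0 0 =
      (A.submatrix Fin.castSucc Fin.castSucc).submatrix e₀ e₀ := by
    ext (i | i) (j | j) <;> simp [e, e₀, borderedMinor]
  have h11 : (A.submatrix e e).borderedMinor 1 1 =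
      (A.submatrix Fin.succ Fin.succ).submatrix eₗ eₗ := by
    ext (i | i) (j | j) <;> simp [e, eₗ, borderedMinor]
  have h01 : (A.submatrix e e).borderedMinor 0 1 =
      (A.submatrix Fin.castSucc Fin.succ).submatrix e₀ eₗ := by
    ext (i | i) (j | j) <;> simp [e, e₀, eₗ, borderedMinor]
  have h10 : (A.submatrix e e).borderedMinor 1 0 =
      (A.submatrix Fin.succ Fin.castSucc).submatrix eₗ e₀ := by
    ext (i | i) (j | j) <;> simp [e, e₀, eₗ, borderedMinor]
  have key := det_mul_det_toBlocks₂₂ (A.submatrix e e)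
  rw [h00, h11, h01, h10, det_submatrix_mul_det_submatrix_swap, det_submatrix_equiv_self,
    det_submatrix_equiv_self, det_submatrix_equiv_self] at key
  exact key

end Matrix

def hankelDiffMatrix (m : ℕ) (u : ℕ → ℝ) (k n : ℕ) : Matrix (Fin k) (Fin k) ℝ :=
  Matrix.of fun i j => fd^[i.val * m] u (n + j.val)

theorem Hd_natCast (m : ℕ) (u : ℕ → ℝ) (k n : ℕ) :
    Hd m u k n = (hankelDiffMatrix m u k n).det := by
  rw [Hd, if_neg (by omega)]
  rfl

theorem Hd_zero (m : ℕ) (u : ℕ → ℝ) (n : ℕ) : Hd m u 0 n = 1 :=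
  (Hd_natCast m u 0 n).trans Matrix.det_isEmpty

theorem Hd_of_neg (m : ℕ) (u : ℕ → ℝ) {k : ℤ} (hk : k < 0) (n : ℕ) : Hd m u k n = 0 :=
  if_pos hk

theorem hankelDiffMatrix_submatrix (m : ℕ) (u : ℕ → ℝ) {k k' : ℕ} (n a b : ℕ)
    (r c : Fin k → Fin k') (hr : ∀ i, (r i : ℕ) = i + a) (hc : ∀ j, (c j : ℕ) = j + b) :
    (hankelDiffMatrix m u k' n).submatrix r c = hankelDiffMatrix m (fd^[a * m] u) k (n + b) := by
  ext i j
  simp only [hankelDiffMatrix, Matrix.submatrix_apply, Matrix.of_apply, hr, hc, add_mul,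
    Function.iterate_add_apply, add_assoc, add_comm b]

theorem Hd_mul_Hd_sub_two (m : ℕ) (u : ℕ → ℝ) (k n : ℕ) :
    Hd m u k n * Hd m (fd^[m] u) (k - 2) (n + 1) =
      Hd m (fd^[m] u) (k - 1) (n + 1) * Hd m u (k - 1) n -
        Hd m (fd^[m] u) (k - 1) n * Hd m u (k - 1) (n + 1) := by
  rcases k with _ | _ | k
  · simp [Hd_of_neg]
  · simp [Hd_of_neg, Hd_zero]
  · have h1 : ((k + 2 : ℕ) : ℤ) - 1 = (k + 1 : ℕ) := by omega
    have h2 : ((k + 2 : ℕ) : ℤ) - 2 = k := by omega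
    have key := Matrix.desnanot_jacobi (hankelDiffMatrix m u (k + 2) n)
    rw [hankelDiffMatrix_submatrix m u n 1 1 (Fin.succ ∘ Fin.castSucc) (Fin.succ ∘ Fin.castSucc)
        (fun _ => rfl) (fun _ => rfl),
      hankelDiffMatrix_submatrix m u n 0 0 Fin.castSucc Fin.castSucc (fun _ => rfl) (fun _ => rfl),
      hankelDiffMatrix_submatrix m u n 1 1 Fin.succ Fin.succ (fun _ => rfl) (fun _ => rfl),
      hankelDiffMatrix_submatrix m u n 0 1 Fin.castSucc Fin.succ (fun _ => rfl) (fun _ => rfl),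
      hankelDiffMatrix_submatrix m u n 1 0 Fin.succ Fin.castSucc (fun _ => rfl) (fun _ => rfl)]
      at key
    simp only [zero_mul, one_mul, Function.iterate_zero, id_eq, add_zero] at key
    rw [h1, h2]
    simp only [Hd_natCast]
    linear_combination key

theorem stmt_8_general (m : ℕ) (S : ℕ → ℝ) (k n : ℕ) :
    Hd m (fd^[1] S) (k : ℤ) n * Hd m (fd^[m + 1] S) ((k : ℤ) - 2) (n + 1) =
      Hd m (fd^[m + 1] S) ((k : ℤ) - 1) (n + 1) * Hd m (fd^[1] S) ((k : ℤ) - 1) n -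
        Hd m (fd^[m + 1] S) ((k : ℤ) - 1) n * Hd m (fd^[1] S) ((k : ℤ) - 1) (n + 1) := by
  rw [Function.iterate_add_apply]
  exact Hd_mul_Hd_sub_two m (fd^[1] S) k n

/-- Lemma 5: for `k ≥ 1`, `n ≥ 0`: `H_k(ΔS_n) H_{k−2}(Δ^{m+1}S_{n+1})
= H_{k−1}(Δ^{m+1}S_{n+1}) H_{k−1}(ΔS_n) − H_{k−1}(Δ^{m+1}S_n) H_{k−1}(ΔS_{n+1})`
(with the convention `H_{−1} = 0` when `k = 1`). -/
theorem stmt_8 (m : ℕ) (hm : 1 ≤ m) (S : ℕ → ℝ) (k n : ℕ) (hk : 1 ≤ k) :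
    Hd m (fd^[1] S) (k : ℤ) n * Hd m (fd^[m + 1] S) ((k : ℤ) - 2) (n + 1) =
      Hd m (fd^[m + 1] S) ((k : ℤ) - 1) (n + 1) * Hd m (fd^[1] S) ((k : ℤ) - 1) n -
        Hd m (fd^[m + 1] S) ((k : ℤ) - 1) n * Hd m (fd^[1] S) ((k : ℤ) - 1) (n + 1) :=
  stmt_8_general m S k n
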